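/- arXiv:0704.3096 — 2 statements merged into one kernel-verified Lean document; each statement's English description precedes it below -/
import Mathlib

section
/- Let Λ ⊆ ℂ be a lattice, i.e. a ℤ-submodule generated by two complex numbers that are linearly independent over ℝ. If ζ ∈ ℂ satisfies ζ·Λ ⊆ Λ and ζ has finite multiplicative order n (ζ^n = 1 and n is minimal positive), then n ∈ {1, 2, 3, 4, 6}. -/
/-!
Multiplication by `ζ` preserves the rank-two lattice, so by Cayley–Hamilton `ζ` is a root of a
monic integer quadratic `X² - tX + d`. Since `ζ` is a root of unity, `|ζ| = 1`, so `ζ = ±1` if it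
is real; otherwise its conjugate is the other root, so `t = 2 Re ζ ∈ {-2, …, 2}` and
`d = ζ ζ̄ = 1`. Each of the five quadratics `X² - tX + 1` divides `X^m - 1` for some
`m ∈ {1, 2, 3, 4, 6}`, a set closed under taking divisors.
-/

open Complex ComplexConjugate Submodule

theorem exists_int_sq_sub_mul_add_eq_zero_of_mul_mem_span_pair {R : Type*} [CommRing R]
    [NoZeroDivisors R] {a b ζ : R} (ha : a ≠ 0) (hζa : ζ * a ∈ span ℤ ({a, b} : Set R))
    (hζb : ζ * b ∈ span ℤ ({a, b} : Set R)) :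
    ∃ t d : ℤ, ζ ^ 2 - t * ζ + d = 0 := by
  obtain ⟨p, q, hp⟩ := mem_span_pair.mp hζa
  obtain ⟨r, s, hr⟩ := mem_span_pair.mp hζb
  simp only [zsmul_eq_mul] at hp hr
  refine ⟨p + s, p * s - q * r, ?_⟩
  have hmul_a : (ζ ^ 2 - ((p + s : ℤ) : R) * ζ + ((p * s - q * r : ℤ) : R)) * a = 0 := by
    push_cast
    linear_combination ((s : R) - ζ) * hp - (q : R) * hr
  exact (mul_eq_zero.mp hmul_a).resolve_right ha

theorem exists_pow_eq_one_of_sq_sub_mul_add_one_eq_zero {R : Type*} [CommRing R]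
    [NoZeroDivisors R] {ζ : R} {t : ℤ} (ht : |t| ≤ 2) (h : ζ ^ 2 - t * ζ + 1 = 0) :
    ∃ m ∈ ({1, 2, 3, 4, 6} : Set ℕ), ζ ^ m = 1 := by
  obtain rfl | rfl | rfl | rfl | rfl : t = -2 ∨ t = -1 ∨ t = 0 ∨ t = 1 ∨ t = 2 := by
    rw [abs_le] at ht; omega
  · have hζ : ζ + 1 = 0 := pow_eq_zero_iff two_ne_zero |>.mp (by linear_combination h)
    exact ⟨2, by simp, by linear_combination (ζ - 1) * hζ⟩
  · exact ⟨3, by simp, by linear_combination (ζ - 1) * h⟩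
  · exact ⟨4, by simp, by linear_combination (ζ ^ 2 - 1) * h⟩
  · exact ⟨6, by simp, by linear_combination (ζ ^ 4 + ζ ^ 3 - ζ - 1) * h⟩
  · have hζ : ζ - 1 = 0 := pow_eq_zero_iff two_ne_zero |>.mp (by linear_combination h)
    exact ⟨1, by simp, by linear_combination hζ⟩

theorem Complex.add_conj_eq_of_sq_sub_mul_add_eq_zero {ζ : ℂ} {t d : ℝ}
    (h : ζ ^ 2 - t * ζ + d = 0) (hζ : conj ζ ≠ ζ) : ζ + conj ζ = t := by
  have hconj : conj ζ ^ 2 - t * conj ζ + d = 0 := by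
    simpa using congrArg conj h
  have hfactor : (ζ - conj ζ) * (ζ + conj ζ - t) = 0 := by
    linear_combination h - hconj
  exact sub_eq_zero.mp <| (mul_eq_zero.mp hfactor).resolve_left (sub_ne_zero.mpr hζ.symm)

theorem Complex.exists_pow_eq_one_of_norm_eq_one_of_sq_sub_mul_add_eq_zero {ζ : ℂ}
    (hnorm : ‖ζ‖ = 1) {t d : ℤ} (h : ζ ^ 2 - t * ζ + d = 0) :
    ∃ m ∈ ({1, 2, 3, 4, 6} : Set ℕ), ζ ^ m = 1 := by
  have hmul_conj : ζ * conj ζ = 1 := by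
    rw [mul_conj, normSq_eq_norm_sq, hnorm]; norm_num
  by_cases hreal : conj ζ = ζ
  · exact ⟨2, by simp, by rw [sq]; nth_rw 2 [← hreal]; exact hmul_conj⟩
  have htrace : ζ + conj ζ = t := by
    exact_mod_cast add_conj_eq_of_sq_sub_mul_add_eq_zero (d := d) (by exact_mod_cast h) hreal
  have ht : |t| ≤ 2 := by
    have hre : (t : ℝ) = 2 * ζ.re := by
      simpa [add_conj] using (congrArg re htrace).symm
    have hre_le : |ζ.re| ≤ 1 := hnorm ▸ abs_re_le_norm ζ
    have : |(t : ℝ)| ≤ 2 := by rw [hre, abs_mul, abs_two]; linarith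
    exact_mod_cast this
  exact exists_pow_eq_one_of_sq_sub_mul_add_one_eq_zero ht <| by
    linear_combination ζ * htrace - hmul_conj

theorem orderOf_mem_of_pow_eq_one {M : Type*} [Monoid M] {x : M} {m : ℕ}
    (hm : m ∈ ({1, 2, 3, 4, 6} : Set ℕ)) (h : x ^ m = 1) :
    orderOf x ∈ ({1, 2, 3, 4, 6} : Set ℕ) := by
  have hdvd : orderOf x ∣ m := orderOf_dvd_of_pow_eq_one h
  rcases hm with rfl | rfl | rfl | rfl | rfl <;>
  · have hle := Nat.le_of_dvd (by norm_num) hdvd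
    interval_cases orderOf x <;> simp_all

theorem crystallographic_restriction
    (a b : ℂ) (hab : LinearIndependent ℝ ![a, b])
    (Λ : Submodule ℤ ℂ) (hΛ : Λ = Submodule.span ℤ ({a, b} : Set ℂ))
    (ζ : ℂ) (hmul : ∀ x ∈ Λ, ζ * x ∈ Λ)
    (n : ℕ) (hn : 0 < n) (hζ : ζ ^ n = 1)
    (hmin : ∀ k : ℕ, 0 < k → ζ ^ k = 1 → n ≤ k) :
    n ∈ ({1, 2, 3, 4, 6} : Set ℕ) := by
  subst hΛ
  obtain ⟨t, d, hquad⟩ := exists_int_sq_sub_mul_add_eq_zero_of_mul_mem_span_pair (hab.ne_zero 0)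
    (hmul a (subset_span (by simp))) (hmul b (subset_span (by simp)))
  obtain ⟨m, hm, hζm⟩ := exists_pow_eq_one_of_norm_eq_one_of_sq_sub_mul_add_eq_zero
    (norm_eq_one_of_pow_eq_one hζ hn.ne') hquad
  have horder : orderOf ζ = n :=
    (orderOf_eq_iff hn).mpr ⟨hζ, fun k hk hk_pos hζk => (hmin k hk_pos hζk).not_gt hk⟩
  exact horder ▸ orderOf_mem_of_pow_eq_one hm hζm
end

section
/- Let A be an additive abelian group, α : A ≃+ A an automorphism of exact (finite) order m, and ξ ∈ A. Set P_m(ξ) = ∑_{i=0}^{m-1} α^i(ξ), and suppose P_m(ξ) has finite additive order d. Then the affine bijection τ(x) = ξ + α(x) has exact order m·d in the group of bijections of A. -/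
/-!
Write `τ x = ξ + α x` and `P j = ∑_{i<j} αⁱ ξ`. Then `τʲ x = P j + αʲ x`, so `τʲ = id` exactly when
`αʲ = id` (evaluate at `x` and at `0`) and `P j = 0`. The first condition means `m ∣ j`, and since
`P` is a cocycle, `P (m * k) = k • P m` once `αᵐ = id`; so the second then means `d ∣ k`.
-/

namespace AddAut

-- `AddAut A` is written additively: `+` is composition, `0` is the identity and `i • α` is `αⁱ`.
variable {A : Type*} [AddCommGroup A] (α : AddAut A) (ξ : A)

def affine : Equiv.Perm A := α.toEquiv.trans (Equiv.addLeft ξ)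

def orbitSum (j : ℕ) : A := ∑ i ∈ Finset.range j, (i • α) ξ

@[simp]
theorem affine_apply (x : A) : affine α ξ x = ξ + α x := rfl

@[simp]
theorem orbitSum_zero : orbitSum α ξ 0 = 0 := Finset.sum_range_zero _

theorem orbitSum_add (j k : ℕ) :
    orbitSum α ξ (j + k) = orbitSum α ξ j + (j • α) (orbitSum α ξ k) := by
  simp only [orbitSum, Finset.sum_range_add, map_sum, ← AddAut.add_apply, add_nsmul]

theorem orbitSum_succ (j : ℕ) : orbitSum α ξ (j + 1) = ξ + α (orbitSum α ξ j) := by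
  rw [add_comm j 1, orbitSum_add, one_nsmul]
  simp [orbitSum]

theorem affine_pow_apply (j : ℕ) (x : A) :
    (affine α ξ ^ j) x = orbitSum α ξ j + (j • α) x := by
  induction j with
  | zero => simp
  | succ j ih =>
    rw [pow_succ', Equiv.Perm.mul_apply, ih, affine_apply, orbitSum_succ, succ_nsmul',
      AddAut.add_apply, map_add, add_assoc]

theorem orbitSum_mul_of_nsmul_eq_zero {m : ℕ} (hm : m • α = 0) (k : ℕ) :
    orbitSum α ξ (m * k) = k • orbitSum α ξ m := by
  induction k with
  | zero => simp
  | succ k ih =>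
    rw [mul_add_one, orbitSum_add, ih, mul_nsmul, hm, nsmul_zero, AddAut.zero_apply, succ_nsmul]

theorem affine_pow_eq_one_iff (j : ℕ) :
    affine α ξ ^ j = 1 ↔ j • α = 0 ∧ orbitSum α ξ j = 0 := by
  constructor
  · intro h
    have hfix (x : A) : orbitSum α ξ j + (j • α) x = x := by
      rw [← affine_pow_apply, h, Equiv.Perm.one_apply]
    have hP : orbitSum α ξ j = 0 := by simpa using hfix 0
    exact ⟨AddEquiv.ext fun x => by simpa [hP] using hfix x, hP⟩
  · rintro ⟨hα, hP⟩
    ext x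
    simp [affine_pow_apply, hα, hP]

theorem affine_pow_eq_one_iff_dvd (j : ℕ) :
    affine α ξ ^ j = 1 ↔ addOrderOf α * addOrderOf (orbitSum α ξ (addOrderOf α)) ∣ j := by
  rw [affine_pow_eq_one_iff, ← addOrderOf_dvd_iff_nsmul_eq_zero]
  constructor
  · rintro ⟨⟨k, rfl⟩, hP⟩
    rw [orbitSum_mul_of_nsmul_eq_zero α ξ (addOrderOf_nsmul_eq_zero α)] at hP
    exact mul_dvd_mul_left _ (addOrderOf_dvd_of_nsmul_eq_zero hP)
  · rintro ⟨k, rfl⟩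
    refine ⟨dvd_mul_of_dvd_left (dvd_mul_right _ _) k, ?_⟩
    rw [mul_assoc, orbitSum_mul_of_nsmul_eq_zero α ξ (addOrderOf_nsmul_eq_zero α), mul_nsmul,
      addOrderOf_nsmul_eq_zero, nsmul_zero]

theorem orderOf_affine :
    orderOf (affine α ξ) = addOrderOf α * addOrderOf (orbitSum α ξ (addOrderOf α)) :=
  Nat.dvd_antisymm (orderOf_dvd_of_pow_eq_one ((affine_pow_eq_one_iff_dvd α ξ _).2 dvd_rfl))
    ((affine_pow_eq_one_iff_dvd α ξ _).1 (pow_orderOf_eq_one _))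

end AddAut

theorem affine_order_general {A : Type*} [AddCommGroup A] (α : AddAut A) (m : ℕ)
    (hord : addOrderOf α = m) (ξ : A) (d : ℕ)
    (hdo : addOrderOf (∑ i ∈ Finset.range m, (i • α) ξ) = d) :
    orderOf ((α.toEquiv.trans (Equiv.addLeft ξ)) : Equiv.Perm A) = m * d := by
  subst hord hdo
  exact AddAut.orderOf_affine α ξ

theorem affine_order {A : Type*} [AddCommGroup A] (α : AddAut A) (m : ℕ)
    (hm : 0 < m) (hord : addOrderOf α = m) (ξ : A) (d : ℕ) (hd : 0 < d)
    (hdo : addOrderOf (∑ i ∈ Finset.range m, (i • α) ξ) = d) :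
    orderOf ((α.toEquiv.trans (Equiv.addLeft ξ)) : Equiv.Perm A) = m * d :=
  affine_order_general α m hord ξ d hdo
end
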